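/- If the Dirichlet series f(s) = ∑_{n=1}^∞ a_n n^{-s} is absolutely convergent on the line Re s = σ₀ (i.e. ∑_{n=1}^∞ |a_n| n^{-σ₀} < ∞), then lim_{T→∞} (1/T) ∫₀^T |f(σ₀ + it)|² dt = ∑_{n=1}^∞ |a_n|² / n^{2σ₀}. -/

import Mathlib

open Complex MeasureTheory Filter Real Asymptotics

/-- The value of the Dirichlet series `∑_{n=1}^∞ a_n n^{-s}` at the point `s = σ₀ + i t`. -/
noncomputable def dirichletVal (a : ℕ → ℂ) (σ₀ t : ℝ) : ℂ :=
  ∑' n : ℕ, a (n + 1) / ((n + 1 : ℕ) : ℂ) ^ ((σ₀ : ℂ) + t * Complex.I)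

lemma aux_cross (θ : ℝ) (hθ : θ ≠ 0) :
    Tendsto (fun T : ℝ => (1/T : ℂ) * ∫ t in (0:ℝ)..T, Complex.exp ((θ : ℂ) * Complex.I * t))
      atTop (nhds 0) := by
  have hc : (θ : ℂ) * Complex.I ≠ 0 := by
    simp [Complex.ext_iff, hθ]
  apply squeeze_zero_norm' (a := fun T : ℝ => (2 / ‖(θ:ℂ)*Complex.I‖) / T)
  · filter_upwards [eventually_gt_atTop (0:ℝ)] with T hT
    rw [integral_exp_mul_complex hc, norm_mul, norm_div]
    have e1 : ∀ s : ℝ, ‖Complex.exp ((θ:ℂ)*Complex.I*s)‖ = 1 := by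
      intro s
      rw [Complex.norm_exp]
      norm_num [Complex.mul_re]
    have h1 : ‖Complex.exp ((θ:ℂ)*Complex.I*(T:ℝ)) - Complex.exp ((θ:ℂ)*Complex.I*((0:ℝ):ℂ))‖ ≤ 2 := by
      refine (norm_sub_le _ _).trans ?_
      rw [e1 T, e1 0]; norm_num
    have h2 : ‖((T:ℝ) : ℂ)‖ = T := by
      rw [Complex.norm_real, Real.norm_of_nonneg hT.le]
    rw [norm_one, h2, norm_div]
    have h1' : ‖Complex.exp ((θ:ℂ)*Complex.I*(T:ℝ)) - Complex.exp ((θ:ℂ)*Complex.I*((0:ℝ):ℂ))‖ ≤ 2 := h1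
    calc 1 / T * (‖Complex.exp ((θ:ℂ)*Complex.I*(T:ℝ)) - Complex.exp ((θ:ℂ)*Complex.I*((0:ℝ):ℂ))‖ / ‖(θ:ℂ) * Complex.I‖)
        ≤ 1/T * (2 / ‖(θ:ℂ) * Complex.I‖) := by gcongr
      _ = 2 / ‖(θ:ℂ)*Complex.I‖ / T := by ring
  · exact Tendsto.div_atTop tendsto_const_nhds tendsto_id

lemma aux_diag :
    Tendsto (fun T : ℝ => (1/T : ℂ) * ∫ t in (0:ℝ)..T, (1:ℂ)) atTop (nhds 1) := by
  have : ∀ᶠ T : ℝ in atTop, (1/T : ℂ) * ∫ t in (0:ℝ)..T, (1:ℂ) = 1 := by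
    filter_upwards [eventually_gt_atTop (0:ℝ)] with T hT
    rw [intervalIntegral.integral_const]
    simp only [sub_zero, smul_eq_mul, mul_one]
    field_simp
    rw [Complex.real_smul, mul_one]; exact div_self (by exact_mod_cast hT.ne')
  exact Tendsto.congr' (this.mono fun T h => h.symm) tendsto_const_nhds

lemma dirichletVal_eq (a : ℕ → ℂ) (σ₀ t : ℝ) :
    dirichletVal a σ₀ t = ∑' n : ℕ, (a (n+1) / ((n+1:ℕ):ℂ) ^ (σ₀:ℂ)) *
      Complex.exp (((-(Real.log ((n+1:ℕ):ℝ)) : ℝ) : ℂ) * Complex.I * t) := by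
  unfold dirichletVal
  congr 1; funext n
  have hN : ((n+1:ℕ):ℂ) ≠ 0 := by exact_mod_cast Nat.succ_ne_zero n
  have hlog : Complex.log ((n+1:ℕ):ℂ) = ((Real.log ((n+1:ℕ):ℝ) : ℝ) : ℂ) := by
    rw [show ((n+1:ℕ):ℂ) = (((n+1:ℕ):ℝ):ℂ) by push_cast; ring,
      Complex.ofReal_log (by positivity)]
  rw [Complex.cpow_add _ _ hN,
    show ((n+1:ℕ):ℂ) ^ ((t:ℂ)*Complex.I) =
      Complex.exp (((Real.log ((n+1:ℕ):ℝ) : ℝ) : ℂ) * ((t:ℂ)*Complex.I)) by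
        rw [Complex.cpow_def_of_ne_zero hN, hlog]]
  rw [div_mul_eq_div_div, div_eq_mul_inv (a (n+1) / _), ← Complex.exp_neg]
  congr 1
  push_cast
  ring_nf

set_option maxHeartbeats 1000000 in
theorem stmt_0 (a : ℕ → ℂ) (σ₀ : ℝ)
    (habs : Summable fun n : ℕ => ‖a (n + 1)‖ / ((n + 1 : ℕ) : ℝ) ^ σ₀) :
    Tendsto
      (fun T : ℝ => (1 / T) *
        ∫ t in (0:ℝ)..T, (‖dirichletVal a σ₀ t‖) ^ 2)
      atTop
      (nhds (∑' n : ℕ, (‖a (n + 1)‖) ^ 2 / ((n + 1 : ℕ) : ℝ) ^ (2 * σ₀))) := by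
  classical
  set b : ℕ → ℂ := fun n => a (n+1) / ((n+1:ℕ):ℂ) ^ (σ₀:ℂ) with hbdef
  set x : ℕ → ℝ := fun n => Real.log ((n+1:ℕ):ℝ) with hxdef
  set f : ℝ → ℂ := fun t => dirichletVal a σ₀ t with hfdef
  -- norms of b
  have hbn : ∀ n, ‖b n‖ = ‖a (n+1)‖ / ((n+1:ℕ):ℝ) ^ σ₀ := by
    intro n
    rw [hbdef]
    simp only
    rw [norm_div]
    congr 1
    rw [show ((n+1:ℕ):ℂ) = (((n+1:ℕ):ℝ):ℂ) by push_cast; ring,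
      Complex.norm_cpow_eq_rpow_re_of_pos (by positivity)]
    simp
  have hbsum : Summable fun n => ‖b n‖ := by
    simp only [hbn]; exact habs
  have hbsum2 : Summable (fun p : ℕ × ℕ => ‖b p.1‖ * ‖b p.2‖) :=
    hbsum.mul_of_nonneg hbsum (fun n => norm_nonneg _) (fun n => norm_nonneg _)
  -- pointwise product expansion
  have hprod : ∀ t : ℝ, f t * (starRingEnd ℂ) (f t) =
      ∑' p : ℕ × ℕ, (b p.1 * (starRingEnd ℂ) (b p.2)) *
        Complex.exp (((x p.2 - x p.1 : ℝ) : ℂ) * Complex.I * t) := by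
    intro t
    have hf : f t = ∑' n : ℕ, b n * Complex.exp (((-(x n) : ℝ) : ℂ) * Complex.I * t) :=
      dirichletVal_eq a σ₀ t
    have hexpnorm : ∀ (y : ℝ) (n : ℕ), ‖Complex.exp (((y : ℝ) : ℂ) * Complex.I * t)‖ = 1 := by
      intro y n
      rw [Complex.norm_exp]
      norm_num [Complex.mul_re]
    have hn1 : Summable fun n => ‖b n * Complex.exp (((-(x n) : ℝ) : ℂ) * Complex.I * t)‖ := by
      apply hbsum.congr
      intro n
      rw [norm_mul, hexpnorm _ n, mul_one]
    have hconjf : (starRingEnd ℂ) (f t) =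
        ∑' n : ℕ, (starRingEnd ℂ) (b n) * Complex.exp (((x n : ℝ) : ℂ) * Complex.I * t) := by
      rw [hf]
      rw [show (starRingEnd ℂ) (∑' (n : ℕ), b n * Complex.exp (((-(x n) : ℝ) : ℂ) * Complex.I * t)) = ∑' (n : ℕ), star (b n * Complex.exp (((-(x n) : ℝ) : ℂ) * Complex.I * t)) from tsum_star]
      congr 1; funext n
      rw [show star (b n * Complex.exp (((-(x n) : ℝ) : ℂ) * Complex.I * t)) =
        (starRingEnd ℂ) (b n * Complex.exp (((-(x n) : ℝ) : ℂ) * Complex.I * t)) from rfl,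
        map_mul, ← Complex.exp_conj]
      congr 2
      simp [Complex.ext_iff]
    have hn2 : Summable fun n =>
        ‖(starRingEnd ℂ) (b n) * Complex.exp (((x n : ℝ) : ℂ) * Complex.I * t)‖ := by
      apply hbsum.congr
      intro n
      rw [norm_mul, hexpnorm _ n, mul_one, RingHomIsometric.norm_map]
    rw [hconjf, hf, tsum_mul_tsum_of_summable_norm hn1 hn2]
    congr 1; funext p
    rw [mul_mul_mul_comm, ← Complex.exp_add]
    congr 2
    push_cast
    ring
  -- term functions
  set F : ℝ → ℕ × ℕ → ℂ := fun T p => (b p.1 * (starRingEnd ℂ) (b p.2)) *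
      ((1/T : ℂ) * ∫ t in (0:ℝ)..T, Complex.exp (((x p.2 - x p.1 : ℝ) : ℂ) * Complex.I * t))
    with hFdef
  set G : ℕ × ℕ → ℂ := fun p => if p.2 = p.1 then b p.1 * (starRingEnd ℂ) (b p.1) else 0
    with hGdef
  have hexpnorm : ∀ (y t : ℝ), ‖Complex.exp (((y : ℝ) : ℂ) * Complex.I * t)‖ = 1 := by
    intro y t
    rw [Complex.norm_exp]
    norm_num [Complex.mul_re]
  -- interchange of sum and integral
  have key : ∀ T : ℝ, 0 < T →
      (1/T : ℂ) * ∫ t in (0:ℝ)..T, f t * (starRingEnd ℂ) (f t) = ∑' p : ℕ × ℕ, F T p := by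
    intro T hT
    have hint : ∫ t in (0:ℝ)..T, f t * (starRingEnd ℂ) (f t) =
        ∑' p : ℕ × ℕ, ∫ t in (0:ℝ)..T, (b p.1 * (starRingEnd ℂ) (b p.2)) *
          Complex.exp (((x p.2 - x p.1 : ℝ) : ℂ) * Complex.I * t) := by
      rw [intervalIntegral.integral_congr (fun t _ => hprod t)]
      rw [intervalIntegral.integral_of_le hT.le]
      have := MeasureTheory.integral_tsum_of_summable_integral_norm
        (μ := volume.restrict (Set.Ioc (0:ℝ) T))
        (F := fun (p : ℕ × ℕ) (t : ℝ) => (b p.1 * (starRingEnd ℂ) (b p.2)) *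
          Complex.exp (((x p.2 - x p.1 : ℝ) : ℂ) * Complex.I * t))
        (fun p => by
          apply Continuous.integrableOn_Ioc
          fun_prop)
        ?_
      · rw [← this]
        refine tsum_congr fun p => ?_
        rw [intervalIntegral.integral_of_le hT.le]
      · apply Summable.congr (hbsum2.mul_right T)
        intro p
        have : ∀ t : ℝ, ‖(b p.1 * (starRingEnd ℂ) (b p.2)) *
            Complex.exp (((x p.2 - x p.1 : ℝ) : ℂ) * Complex.I * t)‖ = ‖b p.1‖ * ‖b p.2‖ := by
          intro t
          rw [norm_mul, hexpnorm, mul_one, norm_mul, RingHomIsometric.norm_map]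
        simp only [this]
        rw [MeasureTheory.setIntegral_const, Real.volume_real_Ioc_of_le hT.le, smul_eq_mul,
          sub_zero]
        ring
    rw [hint, ← tsum_mul_left]
    refine tsum_congr fun p => ?_
    rw [intervalIntegral.integral_const_mul]
    ring
  -- convergence of the sum of means
  have hlim : Tendsto (fun T : ℝ => ∑' p : ℕ × ℕ, F T p) atTop (nhds (∑' p : ℕ × ℕ, G p)) := by
    apply tendsto_tsum_of_dominated_convergence hbsum2
    · intro p
      by_cases h : p.2 = p.1
      · have hx0 : x p.2 - x p.1 = 0 := by rw [h, sub_self]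
        have : ∀ T : ℝ, F T p = (b p.1 * (starRingEnd ℂ) (b p.2)) *
            ((1/T : ℂ) * ∫ t in (0:ℝ)..T, (1:ℂ)) := by
          intro T
          rw [hFdef]
          simp only [hx0]
          norm_num
        simp only [this]
        have := (aux_diag).const_mul (b p.1 * (starRingEnd ℂ) (b p.2))
        rw [mul_one] at this
        convert this using 2
        simp [hGdef, h]
      · have hxne : x p.2 - x p.1 ≠ 0 := by
          rw [sub_ne_zero]
          intro hcon
          apply h
          have : ((p.2+1:ℕ):ℝ) = ((p.1+1:ℕ):ℝ) := by
            rw [← Real.exp_log (show (0:ℝ) < ((p.2+1:ℕ):ℝ) by positivity),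
              ← Real.exp_log (show (0:ℝ) < ((p.1+1:ℕ):ℝ) by positivity)]
            exact congrArg Real.exp hcon
          have : p.2 + 1 = p.1 + 1 := by exact_mod_cast this
          omega
        have := (aux_cross _ hxne).const_mul (b p.1 * (starRingEnd ℂ) (b p.2))
        rw [mul_zero] at this
        convert this using 2
        rw [hGdef]
        simp only [if_neg h]
    · filter_upwards [eventually_gt_atTop (0:ℝ)] with T hT
      intro p
      rw [hFdef]
      simp only
      rw [norm_mul, norm_mul, RingHomIsometric.norm_map, norm_mul]
      have h1 : ‖∫ t in (0:ℝ)..T, Complex.exp (((x p.2 - x p.1 : ℝ) : ℂ) * Complex.I * t)‖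
          ≤ 1 * |T - 0| := by
        apply intervalIntegral.norm_integral_le_of_norm_le_const
        intro u hu
        rw [hexpnorm]
      have h2 : ‖(1/T : ℂ)‖ = 1/T := by
        rw [show ((1/T : ℂ)) = ((1/T : ℝ) : ℂ) by push_cast; ring, Complex.norm_real,
          Real.norm_of_nonneg (by positivity)]
      calc ‖b p.1‖ * ‖b p.2‖ * (‖(1/T : ℂ)‖ * ‖∫ t in (0:ℝ)..T,
              Complex.exp (((x p.2 - x p.1 : ℝ) : ℂ) * Complex.I * t)‖)
          ≤ ‖b p.1‖ * ‖b p.2‖ * ((1/T) * (1 * |T - 0|)) := by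
            rw [h2]; gcongr
          _ = ‖b p.1‖ * ‖b p.2‖ := by
            rw [sub_zero, abs_of_pos hT]
            field_simp
  -- value of the limit sum
  have hG : ∑' p : ℕ × ℕ, G p =
      (((∑' n : ℕ, ‖a (n+1)‖^2 / ((n+1:ℕ):ℝ)^(2*σ₀)) : ℝ) : ℂ) := by
    have hdiag : ∀ n : ℕ, b n * (starRingEnd ℂ) (b n) =
        ((‖a (n+1)‖^2 / ((n+1:ℕ):ℝ)^(2*σ₀) : ℝ) : ℂ) := by
      intro n
      rw [Complex.mul_conj, ← Complex.sq_norm]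
      norm_cast
      have : ‖b n‖ = ‖b n‖ := rfl
      rw [this, hbn, div_pow, ← Real.rpow_natCast (((n+1:ℕ):ℝ) ^ σ₀) 2,
        ← Real.rpow_mul (by positivity)]
      norm_num [mul_comm]
    have hGsum : Summable G := by
      apply hbsum2.of_norm_bounded
      intro p
      rw [hGdef]
      by_cases h : p.2 = p.1
      · simp only [if_pos h]
        rw [norm_mul, RingHomIsometric.norm_map, h]
      · simp only [if_neg h, norm_zero]
        positivity
    rw [Complex.ofReal_tsum, hGsum.tsum_prod' hGsum.prod_factor]
    refine tsum_congr fun m => ?_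
    have : ∀ n : ℕ, G (m, n) = if n = m then b m * (starRingEnd ℂ) (b m) else 0 := by
      intro n; rfl
    simp only [this]
    rw [tsum_ite_eq m, hdiag]
  -- conclusion
  have hre := (Complex.continuous_re.tendsto _).comp hlim
  rw [hG, Complex.ofReal_re] at hre
  apply hre.congr'
  filter_upwards [eventually_gt_atTop (0:ℝ)] with T hT
  have hpt : ∀ t : ℝ, f t * (starRingEnd ℂ) (f t) = ((‖f t‖^2 : ℝ) : ℂ) := by
    intro t
    rw [Complex.mul_conj, ← Complex.sq_norm]
  simp only [Function.comp_apply]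
  rw [← key T hT,
    intervalIntegral.integral_congr (fun t _ => hpt t), intervalIntegral.integral_ofReal,
    show (1/T : ℂ) = ((1/T : ℝ) : ℂ) by push_cast; ring, ← Complex.ofReal_mul,
    Complex.ofReal_re]
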